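/- arXiv:1505.03645 — 5 statements merged into one kernel-verified Lean document; each statement's English description precedes it below -/
import Mathlib

section
/- For every real z with z < 0 or z > 2 one has the representation b(z) = (1/π) ∫_0^π cos² q / ((z−1)² − cos² q) dq, and consequently b(z) > 0. -/
open MeasureTheory Real Filter Topology Asymptotics

/-- `a(z) = (1/2π)∫_{−π}^{π} dq/(z − 1 + cos q)`. -/
noncomputable def aF (z : ℝ) : ℝ :=
  (2 * Real.pi)⁻¹ * ∫ q in (-Real.pi)..Real.pi, (z - 1 + Real.cos q)⁻¹

/-- `b(z) = −(1/2π)∫_{−π}^{π} cos q dq/(z − 1 + cos q)`. -/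
noncomputable def bF (z : ℝ) : ℝ :=
  -((2 * Real.pi)⁻¹ * ∫ q in (-Real.pi)..Real.pi, Real.cos q / (z - 1 + Real.cos q))

/-- `c(z) = (1/2π)∫_{−π}^{π} cos² q dq/(z − 1 + cos q)`. -/
noncomputable def cF (z : ℝ) : ℝ :=
  (2 * Real.pi)⁻¹ * ∫ q in (-Real.pi)..Real.pi, (Real.cos q) ^ 2 / (z - 1 + Real.cos q)

/-- The Fredholm determinant `Δ(μ,λ;z) = (1 − μ a(z))(1 − λ c(z)) − μλ b(z)²`. -/
noncomputable def Δdet (μ lam z : ℝ) : ℝ :=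
  (1 - μ * aF z) * (1 - lam * cF z) - μ * lam * (bF z) ^ 2

/-!
Split `[-π, π]` at `0` and shift the left half by `π`: since `cos (q - π) = -cos q`, an integral
`∫_{-π}^{π} F (cos q)` becomes `∫_0^π (F (cos q) + F (-cos q))`. For `F x = x / (w + x)` with
`w = z - 1` and `|w| > 1`, the symmetrised integrand is `-2 cos² q / (w² - cos² q)`, which gives the
representation; it is nonnegative and positive at `q = 0`, which gives `b(z) > 0`.
-/

theorem div_add_self_add_neg_div_add_neg {K : Type*} [Field K] {w x : K} (h : x ^ 2 ≠ w ^ 2) :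
    x / (w + x) + -x / (w + -x) = -2 * (x ^ 2 / (w ^ 2 - x ^ 2)) := by
  have hsum : w + x ≠ 0 := fun h0 => h (by linear_combination (x - w) * h0)
  have hdiff : w + -x ≠ 0 := fun h0 => h (by linear_combination -(x + w) * h0)
  have hsq : w ^ 2 - x ^ 2 ≠ 0 := sub_ne_zero.2 (Ne.symm h)
  field_simp
  ring

open intervalIntegral in
theorem integral_comp_cos_eq_integral_add_comp_neg_cos {F : ℝ → ℝ}
    (hF : ContinuousOn F (Set.Icc (-1) 1)) :
    ∫ q in -π..π, F (cos q) = ∫ q in 0..π, (F (cos q) + F (-cos q)) := by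
  have hc : Continuous fun q => F (cos q) :=
    hF.comp_continuous continuous_cos fun q => ⟨neg_one_le_cos q, cos_le_one q⟩
  have hshift : ∫ q in -π..0, F (cos q) = ∫ q in 0..π, F (-cos q) := by
    simpa [cos_sub_pi] using (integral_comp_sub_right (fun q => F (cos q)) π (a := 0) (b := π)).symm
  rw [← integral_add_adjacent_intervals (hc.intervalIntegrable (-π) 0) (hc.intervalIntegrable 0 π),
    hshift, integral_add (hc.intervalIntegrable 0 π), add_comm]
  exact (hF.comp_continuous continuous_cos.neg fun q =>
    ⟨neg_le_neg (cos_le_one q), neg_le.1 (neg_one_le_cos q)⟩).intervalIntegrable 0 π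

open intervalIntegral in
/-- For every real `z` with `z < 0` or `z > 2` one has
`b(z) = (1/π) ∫_0^π cos² q / ((z−1)² − cos² q) dq`, and consequently `b(z) > 0`. -/
theorem bF_repr_and_pos (z : ℝ) (hz : z < 0 ∨ 2 < z) :
    bF z = Real.pi⁻¹ * ∫ q in (0:ℝ)..Real.pi,
        (Real.cos q) ^ 2 / ((z - 1) ^ 2 - (Real.cos q) ^ 2) ∧
    0 < bF z := by
  have hw : 1 < (z - 1) ^ 2 := by rcases hz with h | h <;> nlinarith
  have hcos : ∀ q, cos q ^ 2 < (z - 1) ^ 2 := fun q => (cos_sq_le_one q).trans_lt hw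
  have hF : ContinuousOn (fun x => x / (z - 1 + x)) (Set.Icc (-1) 1) :=
    continuousOn_id.div (continuousOn_const.add continuousOn_id) fun x hx h0 => by
      nlinarith [hx.1, hx.2]
  have hrepr : bF z = π⁻¹ * ∫ q in (0:ℝ)..π, cos q ^ 2 / ((z - 1) ^ 2 - cos q ^ 2) := by
    rw [bF, integral_comp_cos_eq_integral_add_comp_neg_cos hF,
      integral_congr fun q _ => div_add_self_add_neg_div_add_neg (hcos q).ne,
      intervalIntegral.integral_const_mul]
    field_simp
  refine ⟨hrepr, hrepr ▸ mul_pos (inv_pos.2 pi_pos) (integral_pos pi_pos ?_ ?_ ⟨0, ?_, ?_⟩)⟩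
  · exact ((continuous_cos.pow 2).div (continuous_const.sub (continuous_cos.pow 2))
      fun q => (sub_pos.2 (hcos q)).ne').continuousOn
  · exact fun q _ => div_nonneg (sq_nonneg _) (sub_nonneg.2 (hcos q).le)
  · exact Set.left_mem_Icc.2 pi_pos.le
  · simpa using hw
end

section
/- On the interval (2, +∞) the functions a, b, c are positive and strictly decreasing: for all real z, w with 2 < z < w one has a(z) > a(w) > 0, b(z) > b(w) > 0 and c(z) > c(w) > 0. -/
open MeasureTheory Real Filter Topology Asymptotics

/-! Since `cos² q = (z - 1 + cos q) cos q - (z - 1) cos q` and `∫ cos = 0`, one has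
`c(z) = (z - 1) b(z)`. The integrands of `a` and `c` have nonnegative numerators, so `a` and `c`
are positive and decrease pointwise in `z`; hence so does `b = c / (z - 1)`, whose denominator
is positive and increasing. -/

open intervalIntegral Set

lemma sub_one_add_cos_pos {z : ℝ} (hz : 2 < z) (q : ℝ) : 0 < z - 1 + cos q := by
  linarith [neg_one_le_cos q]

lemma continuous_div_sub_one_add_cos {f : ℝ → ℝ} (hf : Continuous f) {z : ℝ} (hz : 2 < z) :
    Continuous fun q => f q / (z - 1 + cos q) :=
  hf.div (continuous_const.add continuous_cos) fun q => (sub_one_add_cos_pos hz q).ne'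

/-- The mean of `f` against the resolvent `(z - ε(q))⁻¹ = (z - 1 + cos q)⁻¹`. -/
noncomputable def resolventMean (f : ℝ → ℝ) (z : ℝ) : ℝ :=
  (2 * π)⁻¹ * ∫ q in -π..π, f q / (z - 1 + cos q)

lemma integral_lt_integral_of_le_of_lt_at_zero {f g : ℝ → ℝ} (hf : Continuous f)
    (hg : Continuous g) (hle : ∀ q, f q ≤ g q) (h0 : f 0 < g 0) :
    ∫ q in -π..π, f q < ∫ q in -π..π, g q :=
  integral_lt_integral_of_continuousOn_of_le_of_exists_lt (by linarith [pi_pos])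
    hf.continuousOn hg.continuousOn (fun q _ => hle q)
    ⟨0, ⟨by linarith [pi_pos], by linarith [pi_pos]⟩, h0⟩

section NonnegNumerator

variable {f : ℝ → ℝ} (hf : Continuous f) (hf_nonneg : ∀ q, 0 ≤ f q) (hf0 : 0 < f 0)
include hf hf_nonneg hf0

lemma resolventMean_pos {z : ℝ} (hz : 2 < z) : 0 < resolventMean f z := by
  have h := integral_lt_integral_of_le_of_lt_at_zero continuous_const
    (continuous_div_sub_one_add_cos hf hz)
    (fun q => div_nonneg (hf_nonneg q) (sub_one_add_cos_pos hz q).le)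
    (div_pos hf0 (sub_one_add_cos_pos hz 0))
  rw [intervalIntegral.integral_zero] at h
  exact mul_pos (by positivity) h

lemma resolventMean_strictAntiOn : StrictAntiOn (resolventMean f) (Ioi 2) := by
  intro z hz w hw hzw
  refine mul_lt_mul_of_pos_left ?_ (by positivity)
  refine integral_lt_integral_of_le_of_lt_at_zero (continuous_div_sub_one_add_cos hf hw)
    (continuous_div_sub_one_add_cos hf hz) (fun q => ?_) ?_
  · exact div_le_div_of_nonneg_left (hf_nonneg q) (sub_one_add_cos_pos hz q) (by linarith)
  · exact div_lt_div_of_pos_left hf0 (sub_one_add_cos_pos hz 0) (by linarith)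

end NonnegNumerator

lemma aF_eq_resolventMean : aF = resolventMean 1 := by
  ext z
  simp only [aF, resolventMean, Pi.one_apply, one_div]

lemma cF_eq_resolventMean : cF = resolventMean (cos · ^ 2) := rfl

lemma bF_eq_neg_resolventMean : bF = fun z => -resolventMean cos z := rfl

lemma resolventMean_cos_sq {z : ℝ} (hz : 2 < z) :
    resolventMean (cos · ^ 2) z = -((z - 1) * resolventMean cos z) := by
  have hsplit : ∀ q, cos q ^ 2 / (z - 1 + cos q) = cos q - (z - 1) * (cos q / (z - 1 + cos q)) :=
    fun q => by field_simp [(sub_one_add_cos_pos hz q).ne']; ring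
  simp only [resolventMean, hsplit]
  rw [integral_sub intervalIntegrable_cos
    (((continuous_div_sub_one_add_cos continuous_cos hz).intervalIntegrable _ _).const_mul _),
    intervalIntegral.integral_const_mul, integral_cos, sin_neg, sin_pi]
  ring

lemma bF_eq_cF_div {z : ℝ} (hz : 2 < z) : bF z = cF z / (z - 1) := by
  rw [eq_div_iff (by linarith), cF_eq_resolventMean, bF_eq_neg_resolventMean,
    resolventMean_cos_sq hz]
  ring

lemma aF_pos {z : ℝ} (hz : 2 < z) : 0 < aF z :=
  aF_eq_resolventMean ▸ resolventMean_pos continuous_const (fun _ => zero_le_one) one_pos hz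

lemma aF_strictAntiOn : StrictAntiOn aF (Ioi 2) :=
  aF_eq_resolventMean ▸ resolventMean_strictAntiOn continuous_const (fun _ => zero_le_one) one_pos

lemma cF_pos {z : ℝ} (hz : 2 < z) : 0 < cF z :=
  resolventMean_pos (continuous_cos.pow 2) (fun _ => sq_nonneg _) (by simp) hz

lemma cF_strictAntiOn : StrictAntiOn cF (Ioi 2) :=
  resolventMean_strictAntiOn (continuous_cos.pow 2) (fun _ => sq_nonneg _) (by simp)

lemma bF_pos {z : ℝ} (hz : 2 < z) : 0 < bF z := by
  rw [bF_eq_cF_div hz]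
  exact div_pos (cF_pos hz) (by linarith)

lemma bF_strictAntiOn : StrictAntiOn bF (Ioi 2) := by
  intro z hz w hw hzw
  rw [bF_eq_cF_div hz, bF_eq_cF_div hw]
  exact div_lt_div₀ (cF_strictAntiOn hz hw hzw) (by linarith) (cF_pos hz).le
    (by linarith [mem_Ioi.mp hz])

/-- On `(2, +∞)` the functions `a, b, c` are positive and strictly decreasing:
for all real `z, w` with `2 < z < w` one has `a(z) > a(w) > 0`, `b(z) > b(w) > 0`
and `c(z) > c(w) > 0`. -/
theorem abc_pos_strictAnti (z w : ℝ) (hz : 2 < z) (hzw : z < w) :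
    (aF w < aF z ∧ 0 < aF w) ∧ (bF w < bF z ∧ 0 < bF w) ∧ (cF w < cF z ∧ 0 < cF w) := by
  have hw : 2 < w := hz.trans hzw
  exact ⟨⟨aF_strictAntiOn hz hw hzw, aF_pos hw⟩, ⟨bF_strictAntiOn hz hw hzw, bF_pos hw⟩,
    ⟨cF_strictAntiOn hz hw hzw, cF_pos hw⟩⟩
end

section
/- As z → 2 from the right the following asymptotics hold, with C₁ = 1/√2: a(z) − C₁ (z−2)^{−1/2} = O((z−2)^{1/2}), b(z) − C₁ (z−2)^{−1/2} + 1 = O((z−2)^{1/2}), and c(z) − C₁ (z−2)^{−1/2} + 1 = O((z−2)^{1/2}) (big-O taken along the filter of right neighborhoods of 2). -/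
open MeasureTheory Real Filter Topology Asymptotics

/-!
For `r > 1`, the root `ρ = r - √(r² - 1) ∈ (0, 1)` of `ρ² - 2rρ + 1` turns `(r + cos q)⁻¹` into
`(r² - 1)^(-1/2)` times the Poisson kernel `(1 - ρ²) / (1 + 2ρ cos q + ρ²)`, whose primitive
`q - 2 arctan (ρ sin q / (1 + ρ cos q))` is smooth on all of `ℝ`. Hence
`∫ dq / (r + cos q) = 2π / √(r² - 1)` over a period, and with `r = z - 1` the functions `a`, `b`,
`c` are `(z - 2)^(-1/2) (z - 1)ⁿ / √z` for `n = 0, 1, 2`, corrected by `-1` resp. `1 - z`.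
Since `(z - 1)ⁿ / √z` is smooth at `2` with value `1/√2`, the expansions follow.
-/

lemma one_add_mul_cos_pos {ρ : ℝ} (hρ : |ρ| < 1) (q : ℝ) : 0 < 1 + ρ * cos q := by
  have := neg_abs_le (ρ * cos q)
  rw [abs_mul] at this
  nlinarith [abs_cos_le_one q, abs_nonneg ρ]

lemma one_add_two_mul_cos_add_sq_pos {ρ : ℝ} (hρ : |ρ| < 1) (q : ℝ) :
    0 < 1 + 2 * ρ * cos q + ρ ^ 2 := by
  nlinarith [one_add_mul_cos_pos hρ q, sin_sq_add_cos_sq q, sq_nonneg (ρ * sin q)]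

lemma hasDerivAt_poissonKernel_primitive {ρ : ℝ} (hρ : |ρ| < 1) (q : ℝ) :
    HasDerivAt (fun q => q - 2 * arctan (ρ * sin q / (1 + ρ * cos q)))
      ((1 - ρ ^ 2) / (1 + 2 * ρ * cos q + ρ ^ 2)) q := by
  have hquot : HasDerivAt (fun q => ρ * sin q / (1 + ρ * cos q))
      ((ρ * cos q * (1 + ρ * cos q) - ρ * sin q * (ρ * -sin q)) / (1 + ρ * cos q) ^ 2) q :=
    ((hasDerivAt_sin q).const_mul ρ).div (((hasDerivAt_cos q).const_mul ρ).const_add 1)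
      (one_add_mul_cos_pos hρ q).ne'
  refine ((hasDerivAt_id q).sub (hquot.arctan.const_mul 2)).congr_deriv ?_
  have := (one_add_mul_cos_pos hρ q).ne'
  have := (one_add_two_mul_cos_add_sq_pos hρ q).ne'
  field_simp
  linear_combination (-2 * ρ ^ 2 * (1 + ρ * cos q)) * sin_sq_add_cos_sq q

theorem integral_poissonKernel {ρ : ℝ} (hρ : |ρ| < 1) :
    ∫ q in -π..π, (1 - ρ ^ 2) / (1 + 2 * ρ * cos q + ρ ^ 2) = 2 * π := by
  rw [intervalIntegral.integral_eq_sub_of_hasDerivAt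
    (fun q _ => hasDerivAt_poissonKernel_primitive hρ q)]
  · simp only [sin_neg, sin_pi, mul_zero, neg_zero, zero_div, arctan_zero]
    ring
  · refine Continuous.intervalIntegrable ?_ _ _
    exact continuous_const.div (by fun_prop) fun q => (one_add_two_mul_cos_add_sq_pos hρ q).ne'

section AddCos

variable {r : ℝ} (hr : 1 < r)
include hr

lemma add_cos_pos (q : ℝ) : 0 < r + cos q := by
  nlinarith [neg_one_le_cos q]

lemma intervalIntegrable_inv_add_cos (a b : ℝ) :
    IntervalIntegrable (fun q => (r + cos q)⁻¹) volume a b :=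
  (continuous_const.add continuous_cos |>.inv₀ fun q => (add_cos_pos hr q).ne').intervalIntegrable
    _ _

theorem integral_inv_add_cos : ∫ q in -π..π, (r + cos q)⁻¹ = 2 * π / √(r ^ 2 - 1) := by
  set s := √(r ^ 2 - 1)
  have hs2 : s ^ 2 = r ^ 2 - 1 := sq_sqrt (by nlinarith)
  have hs : 0 < s := sqrt_pos.2 (by nlinarith)
  have hρ : |r - s| < 1 := abs_lt.2 ⟨by nlinarith, by nlinarith⟩
  have hkernel (q : ℝ) : (r + cos q)⁻¹ =
      s⁻¹ * ((1 - (r - s) ^ 2) / (1 + 2 * (r - s) * cos q + (r - s) ^ 2)) := by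
    have := (add_cos_pos hr q).ne'
    field_simp
    rw [eq_div_iff (by convert (one_add_two_mul_cos_add_sq_pos hρ q).ne' using 1; ring)]
    linear_combination (s - r - cos q) * hs2
  simp_rw [hkernel, intervalIntegral.integral_const_mul, integral_poissonKernel hρ]
  ring

theorem integral_cos_div_add_cos :
    ∫ q in -π..π, cos q / (r + cos q) = 2 * π - r * (2 * π / √(r ^ 2 - 1)) := by
  have hsplit (q : ℝ) : cos q / (r + cos q) = 1 - r * (r + cos q)⁻¹ := by
    field_simp [(add_cos_pos hr q).ne']
    ring
  simp_rw [hsplit]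
  rw [intervalIntegral.integral_sub intervalIntegrable_const
      ((intervalIntegrable_inv_add_cos hr _ _).const_mul r),
    intervalIntegral.integral_const_mul, integral_inv_add_cos hr, intervalIntegral.integral_const]
  simp only [sub_neg_eq_add, smul_eq_mul, mul_one]
  ring

theorem integral_cos_sq_div_add_cos :
    ∫ q in -π..π, cos q ^ 2 / (r + cos q) = r ^ 2 * (2 * π / √(r ^ 2 - 1)) - 2 * π * r := by
  have hsplit (q : ℝ) : cos q ^ 2 / (r + cos q) = (cos q - r) + r ^ 2 * (r + cos q)⁻¹ := by
    field_simp [(add_cos_pos hr q).ne']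
    ring
  simp_rw [hsplit]
  have hcos_sub : IntervalIntegrable (fun q => cos q - r) volume (-π) π :=
    (continuous_cos.sub continuous_const).intervalIntegrable _ _
  rw [intervalIntegral.integral_add hcos_sub
      ((intervalIntegrable_inv_add_cos hr _ _).const_mul _),
    intervalIntegral.integral_sub (continuous_cos.intervalIntegrable _ _) intervalIntegrable_const,
    intervalIntegral.integral_const_mul, integral_inv_add_cos hr, integral_cos,
    intervalIntegral.integral_const]
  simp only [sin_neg, sin_pi, sub_neg_eq_add, smul_eq_mul]
  ring

end AddCos

theorem aF_eq {z : ℝ} (hz : 2 < z) : aF z = (√(z * (z - 2)))⁻¹ := by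
  rw [aF, integral_inv_add_cos (by linarith), show (z - 1) ^ 2 - 1 = z * (z - 2) by ring]
  field_simp [pi_ne_zero]

theorem bF_eq {z : ℝ} (hz : 2 < z) : bF z = (z - 1) * (√(z * (z - 2)))⁻¹ - 1 := by
  rw [bF, integral_cos_div_add_cos (by linarith), show (z - 1) ^ 2 - 1 = z * (z - 2) by ring]
  field_simp [pi_ne_zero]
  ring

theorem cF_eq {z : ℝ} (hz : 2 < z) : cF z = (z - 1) ^ 2 * (√(z * (z - 2)))⁻¹ - (z - 1) := by
  rw [cF, integral_cos_sq_div_add_cos (by linarith), show (z - 1) ^ 2 - 1 = z * (z - 2) by ring]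
  field_simp [pi_ne_zero]

lemma inv_sqrt_mul_eq_rpow_mul {x : ℝ} (hx : 0 ≤ x) (y : ℝ) :
    (√(y * x))⁻¹ = x ^ (-(1 / 2) : ℝ) * (√y)⁻¹ := by
  rw [sqrt_mul' y hx, rpow_neg hx, ← sqrt_eq_rpow, mul_inv, mul_comm]

theorem isBigO_rpow_sub_one_mul_sub {g : ℝ → ℝ} {a : ℝ} (hg : DifferentiableAt ℝ g a) (p : ℝ) :
    (fun z => (z - a) ^ (p - 1) * (g z - g a)) =O[𝓝[>] a] fun z => (z - a) ^ p := by
  have hlin : (fun z => g z - g a) =O[𝓝[>] a] fun z => z - a :=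
    hg.hasFDerivAt.isBigO_sub.mono nhdsWithin_le_nhds
  refine ((isBigO_refl (fun z => (z - a) ^ (p - 1)) _).mul hlin).congr' .rfl ?_
  filter_upwards [self_mem_nhdsWithin] with z (hz : a < z)
  rw [rpow_sub_one (sub_pos.2 hz).ne', div_mul_cancel₀ _ (sub_pos.2 hz).ne']

theorem sub_isBigO_rpow_nhdsGT {a p : ℝ} (hp : p ≤ 1) :
    (fun z => z - a) =O[𝓝[>] a] fun z => (z - a) ^ p := by
  refine IsBigO.of_bound 1 ?_
  filter_upwards [Ioo_mem_nhdsGT (lt_add_one a)] with z ⟨hza, hz1⟩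
  have hpos : 0 < z - a := sub_pos.2 hza
  rw [norm_of_nonneg hpos.le, norm_of_nonneg (rpow_nonneg hpos.le p), one_mul]
  simpa using rpow_le_rpow_of_exponent_ge hpos (by linarith) hp

/-- As `z → 2⁺`, with `C₁ = 1/√2`:
`a(z) − C₁ (z−2)^{−1/2} = O((z−2)^{1/2})`,
`b(z) − C₁ (z−2)^{−1/2} + 1 = O((z−2)^{1/2})`, and
`c(z) − C₁ (z−2)^{−1/2} + 1 = O((z−2)^{1/2})`. -/
theorem abc_asymptotics_right_of_two :
    (fun z : ℝ => aF z - (Real.sqrt 2)⁻¹ * (z - 2) ^ (-(1/2) : ℝ))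
      =O[𝓝[>] (2:ℝ)] (fun z : ℝ => (z - 2) ^ ((1/2) : ℝ)) ∧
    (fun z : ℝ => bF z - (Real.sqrt 2)⁻¹ * (z - 2) ^ (-(1/2) : ℝ) + 1)
      =O[𝓝[>] (2:ℝ)] (fun z : ℝ => (z - 2) ^ ((1/2) : ℝ)) ∧
    (fun z : ℝ => cF z - (Real.sqrt 2)⁻¹ * (z - 2) ^ (-(1/2) : ℝ) + 1)
      =O[𝓝[>] (2:ℝ)] (fun z : ℝ => (z - 2) ^ ((1/2) : ℝ)) := by
  have key (n : ℕ) := isBigO_rpow_sub_one_mul_sub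
    (g := fun z => (z - 1) ^ n * (√z)⁻¹) (a := 2) (by fun_prop (disch := norm_num)) (1 / 2)
  refine ⟨(key 0).congr' ?_ .rfl, (key 1).congr' ?_ .rfl,
    ((key 2).sub (sub_isBigO_rpow_nhdsGT (by norm_num))).congr' ?_ .rfl⟩ <;>
  filter_upwards [self_mem_nhdsWithin] with z (hz : 2 < z) <;>
  norm_num [aF_eq, bF_eq, cF_eq, hz, inv_sqrt_mul_eq_rpow_mul (sub_pos.2 hz).le] <;>
  ring
end

section
/- As z → 0 from the left the following asymptotics hold, with C₀ = 1/√2: a(z) + C₀ (−z)^{−1/2} = O((−z)^{1/2}), b(z) − C₀ (−z)^{−1/2} + 1 = O((−z)^{1/2}), and c(z) + C₀ (−z)^{−1/2} − 1 = O((−z)^{1/2}) (big-O taken along the filter of left neighborhoods of 0). -/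
open MeasureTheory Real Filter Topology Asymptotics

/-! For `z < 0` the substitution `s = r - √(r² - 1)`, `r = 1 - z`, turns `1 / (z - 1 + cos q)`
into a multiple of the Poisson kernel `1 / (1 - 2 s cos q + s²)`, whose integral is elementary;
this gives `a(z) = -1 / (√(-z) √(2 - z))`. Partial fractions in `cos q` give `b = (z - 1) a - 1`
and `c = (1 - z) + (z - 1)² a`. Hence each of the three differences is `k(z) √(-z)` with `k`
continuous at `0`, which is the claimed bound. -/

lemma abs_mul_cos_le_abs (s q : ℝ) : |s * cos q| ≤ |s| := by
  rw [abs_mul]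
  exact mul_le_of_le_one_right (abs_nonneg s) (abs_cos_le_one q)

lemma one_sub_two_mul_cos_add_sq_pos {s : ℝ} (hs : |s| < 1) (q : ℝ) :
    0 < 1 - 2 * s * cos q + s ^ 2 := by
  nlinarith [abs_mul_cos_le_abs s q, le_abs_self (s * cos q), sq_abs s, abs_nonneg s]

theorem integral_inv_one_sub_two_mul_cos_add_sq {s : ℝ} (hs : |s| < 1) :
    ∫ q in (-π)..π, (1 - 2 * s * cos q + s ^ 2)⁻¹ = 2 * π / (1 - s ^ 2) := by
  have hs2 : 1 - s ^ 2 ≠ 0 := by nlinarith [sq_abs s, abs_nonneg s]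
  have hden (q : ℝ) : 1 - s * cos q ≠ 0 := by
    nlinarith [abs_mul_cos_le_abs s q, le_abs_self (s * cos q)]
  -- Unlike `arctan ((1 + s) / (1 - s) * tan (q / 2))`, this antiderivative is smooth on `ℝ`;
  -- its `arctan` term vanishes at `±π`.
  have hderiv (q : ℝ) : HasDerivAt
      (fun q => (1 - s ^ 2)⁻¹ * (q + 2 * arctan (s * sin q / (1 - s * cos q))))
      (1 - 2 * s * cos q + s ^ 2)⁻¹ q := by
    have harctan := (((hasDerivAt_sin q).const_mul s).div
      (((hasDerivAt_cos q).const_mul s).const_sub 1) (hden q)).arctan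
    refine (((hasDerivAt_id q).add (harctan.const_mul 2)).const_mul _).congr_deriv ?_
    have := (one_sub_two_mul_cos_add_sq_pos hs q).ne'
    have := hden q
    have hsq : 1 + (s * sin q / (1 - s * cos q)) ^ 2
        = (1 - 2 * s * cos q + s ^ 2) / (1 - s * cos q) ^ 2 := by
      field_simp
      linear_combination s ^ 2 * sin_sq_add_cos_sq q
    simp only [Pi.div_apply, hsq]
    generalize hD : 1 - 2 * s * cos q + s ^ 2 = D at *
    field_simp
    linear_combination -hD - 2 * s ^ 2 * sin_sq_add_cos_sq q
  have hcont : Continuous fun q => (1 - 2 * s * cos q + s ^ 2)⁻¹ := by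
    have := one_sub_two_mul_cos_add_sq_pos hs
    fun_prop (disch := exact fun q => (this q).ne')
  rw [intervalIntegral.integral_eq_sub_of_hasDerivAt (fun q _ => hderiv q)
    (hcont.intervalIntegrable _ _)]
  simp only [sin_neg, cos_neg, sin_pi, neg_zero, mul_zero, zero_div, arctan_zero, add_zero]
  ring

theorem integral_inv_sub_cos {r : ℝ} (hr : 1 < r) :
    ∫ q in (-π)..π, (r - cos q)⁻¹ = 2 * π / √(r ^ 2 - 1) := by
  have hd : 0 < √(r ^ 2 - 1) := sqrt_pos.mpr (by nlinarith)
  have hd2 : √(r ^ 2 - 1) ^ 2 = r ^ 2 - 1 := sq_sqrt (by nlinarith)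
  -- the root in `(0, 1)` of `s ^ 2 - 2 r s + 1`
  set s := r - √(r ^ 2 - 1)
  have hs0 : 0 < s := by nlinarith
  have hs : |s| < 1 := abs_lt.mpr ⟨by linarith, by nlinarith⟩
  have hkernel (q : ℝ) : (r - cos q)⁻¹ = 2 * s * (1 - 2 * s * cos q + s ^ 2)⁻¹ := by
    rw [show 1 - 2 * s * cos q + s ^ 2 = 2 * s * (r - cos q) by linear_combination hd2]
    have := (one_sub_two_mul_cos_add_sq_pos hs q).ne'
    field_simp
  have hs2 : 1 - s ^ 2 = 2 * s * √(r ^ 2 - 1) := by linear_combination hd2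
  simp only [hkernel, intervalIntegral.integral_const_mul,
    integral_inv_one_sub_two_mul_cos_add_sq hs, hs2]
  field_simp

lemma sub_one_add_cos_neg {z : ℝ} (hz : z < 0) (q : ℝ) : z - 1 + cos q < 0 := by
  linarith [cos_le_one q]

lemma aF_eq_neg_inv_sqrt {z : ℝ} (hz : z < 0) : aF z = -(√(-z) * √(2 - z))⁻¹ := by
  have h (q : ℝ) : (z - 1 + cos q)⁻¹ = -(1 - z - cos q)⁻¹ := by rw [← inv_neg]; ring_nf
  simp only [aF, h, intervalIntegral.integral_neg, integral_inv_sub_cos (by linarith : 1 < 1 - z),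
    ← sqrt_mul (by linarith : 0 ≤ -z)]
  field_simp
  ring_nf

lemma intervalIntegrable_inv_sub_one_add_cos {z : ℝ} (hz : ∀ q, z - 1 + cos q ≠ 0)
    (a b : ℝ) :
    IntervalIntegrable (fun q => (z - 1 + cos q)⁻¹) volume a b :=
  (continuous_const.add continuous_cos).inv₀ hz |>.intervalIntegrable a b

lemma bF_eq_sub_one_mul_aF {z : ℝ} (hz : ∀ q, z - 1 + cos q ≠ 0) :
    bF z = (z - 1) * aF z - 1 := by
  have h (q : ℝ) : cos q / (z - 1 + cos q) = 1 - (z - 1) * (z - 1 + cos q)⁻¹ := by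
    field_simp [hz q]
    ring
  simp only [bF, aF, h]
  rw [intervalIntegral.integral_sub intervalIntegrable_const
      ((intervalIntegrable_inv_sub_one_add_cos hz _ _).const_mul _),
    intervalIntegral.integral_const_mul, intervalIntegral.integral_const, smul_eq_mul]
  field_simp
  ring

lemma cF_eq_sub_one_sq_mul_aF {z : ℝ} (hz : ∀ q, z - 1 + cos q ≠ 0) :
    cF z = 1 - z + (z - 1) ^ 2 * aF z := by
  have h (q : ℝ) :
      cos q ^ 2 / (z - 1 + cos q) = cos q - (z - 1) + (z - 1) ^ 2 * (z - 1 + cos q)⁻¹ := by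
    field_simp [hz q]
    ring
  simp only [cF, aF, h]
  rw [intervalIntegral.integral_add
      ((continuous_cos.intervalIntegrable _ _).sub intervalIntegrable_const)
      ((intervalIntegrable_inv_sub_one_add_cos hz _ _).const_mul _),
    intervalIntegral.integral_sub (continuous_cos.intervalIntegrable _ _) intervalIntegrable_const,
    integral_cos, sin_neg, sin_pi, intervalIntegral.integral_const, smul_eq_mul,
    intervalIntegral.integral_const_mul]
  field_simp
  ring

noncomputable def aRemainder (z : ℝ) : ℝ := (√(2 - z) * √2 * (√(2 - z) + √2))⁻¹

lemma continuousAt_aRemainder : ContinuousAt aRemainder 0 := by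
  show ContinuousAt (fun z => (√(2 - z) * √2 * (√(2 - z) + √2))⁻¹) 0
  exact .inv₀ (by fun_prop) (by norm_num)

lemma aF_add_eq_aRemainder_mul_sqrt {z : ℝ} (hz : z < 0) :
    aF z + (√2)⁻¹ * (√(-z))⁻¹ = aRemainder z * √(-z) := by
  have hu : 0 < √(-z) := sqrt_pos.mpr (by linarith)
  have hv : 0 < √(2 - z) := sqrt_pos.mpr (by linarith)
  have hu2 : √(-z) ^ 2 = -z := sq_sqrt (by linarith)
  have hv2 : √(2 - z) ^ 2 = 2 - z := sq_sqrt (by linarith)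
  have hw2 : √2 ^ 2 = 2 := sq_sqrt (by norm_num)
  rw [aF_eq_neg_inv_sqrt hz, aRemainder]
  field_simp
  linear_combination hv2 - hw2 - hu2

lemma bF_sub_add_one_eq_mul_sqrt {z : ℝ} (hz : z < 0) :
    bF z - (√2)⁻¹ * (√(-z))⁻¹ + 1 = ((z - 1) * aRemainder z + (√2)⁻¹) * √(-z) := by
  have hu : 0 < √(-z) := sqrt_pos.mpr (by linarith)
  have hu2 : √(-z) ^ 2 = -z := sq_sqrt (by linarith)
  rw [bF_eq_sub_one_mul_aF fun q => (sub_one_add_cos_neg hz q).ne,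
    eq_sub_of_add_eq (aF_add_eq_aRemainder_mul_sqrt hz)]
  field_simp
  linear_combination -hu2

lemma cF_add_sub_one_eq_mul_sqrt {z : ℝ} (hz : z < 0) :
    cF z + (√2)⁻¹ * (√(-z))⁻¹ - 1
      = ((z - 1) ^ 2 * aRemainder z - (√2)⁻¹ * (2 - z) + √(-z)) * √(-z) := by
  have hu : 0 < √(-z) := sqrt_pos.mpr (by linarith)
  have hu2 : √(-z) ^ 2 = -z := sq_sqrt (by linarith)
  rw [cF_eq_sub_one_sq_mul_aF fun q => (sub_one_add_cos_neg hz q).ne,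
    eq_sub_of_add_eq (aF_add_eq_aRemainder_mul_sqrt hz)]
  field_simp
  linear_combination (2 - z - √(-z) * √2) * hu2

lemma neg_rpow_neg_half {z : ℝ} (hz : z < 0) : (-z) ^ (-(1 / 2) : ℝ) = (√(-z))⁻¹ := by
  rw [rpow_neg (by linarith), sqrt_eq_rpow]

lemma isBigO_nhdsLT_zero_of_eq_mul_sqrt {f k : ℝ → ℝ} (hk : ContinuousAt k 0)
    (hf : ∀ z < 0, f z = k z * √(-z)) :
    f =O[𝓝[<] 0] fun z => (-z) ^ (1 / 2 : ℝ) := by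
  have hfk : f =ᶠ[𝓝[<] 0] fun z => k z * (-z) ^ (1 / 2 : ℝ) :=
    eventually_nhdsWithin_of_forall fun z hz => by rw [hf z hz, sqrt_eq_rpow]
  refine hfk.trans_isBigO ?_
  simpa using (hk.tendsto.mono_left nhdsWithin_le_nhds).isBigO_one (F := ℝ) |>.mul
    (isBigO_refl (fun z : ℝ => (-z) ^ (1 / 2 : ℝ)) _)

/-- As `z → 0⁻`, with `C₀ = 1/√2`:
`a(z) + C₀ (−z)^{−1/2} = O((−z)^{1/2})`,
`b(z) − C₀ (−z)^{−1/2} + 1 = O((−z)^{1/2})`, and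
`c(z) + C₀ (−z)^{−1/2} − 1 = O((−z)^{1/2})`. -/
theorem abc_asymptotics_left_of_zero :
    (fun z : ℝ => aF z + (Real.sqrt 2)⁻¹ * (-z) ^ (-(1/2) : ℝ))
      =O[𝓝[<] (0:ℝ)] (fun z : ℝ => (-z) ^ ((1/2) : ℝ)) ∧
    (fun z : ℝ => bF z - (Real.sqrt 2)⁻¹ * (-z) ^ (-(1/2) : ℝ) + 1)
      =O[𝓝[<] (0:ℝ)] (fun z : ℝ => (-z) ^ ((1/2) : ℝ)) ∧
    (fun z : ℝ => cF z + (Real.sqrt 2)⁻¹ * (-z) ^ (-(1/2) : ℝ) - 1)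
      =O[𝓝[<] (0:ℝ)] (fun z : ℝ => (-z) ^ ((1/2) : ℝ)) := by
  have hcoeff := continuousAt_aRemainder
  refine ⟨isBigO_nhdsLT_zero_of_eq_mul_sqrt hcoeff fun z hz => ?_,
    isBigO_nhdsLT_zero_of_eq_mul_sqrt (k := fun z => (z - 1) * aRemainder z + (√2)⁻¹)
      (by fun_prop) fun z hz => ?_,
    isBigO_nhdsLT_zero_of_eq_mul_sqrt
      (k := fun z => (z - 1) ^ 2 * aRemainder z - (√2)⁻¹ * (2 - z) + √(-z))
      (by fun_prop) fun z hz => ?_⟩ <;>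
    rw [neg_rpow_neg_half hz]
  exacts [aF_add_eq_aRemainder_mul_sqrt hz, bF_sub_add_one_eq_mul_sqrt hz,
    cF_add_sub_one_eq_mul_sqrt hz]
end

section
/- If μ > 0, λ > 0 and z < 0, then Δ(μ,λ;z) > 0; consequently, for positive μ and λ the determinant Δ(μ,λ;·) has no zero in the interval (−∞, 0). -/
open MeasureTheory Real Filter Topology Asymptotics

/-- If `μ > 0`, `λ > 0` and `z < 0`, then `Δ(μ,λ;z) > 0`; consequently, for positive
`μ` and `λ` the determinant `Δ(μ,λ;·)` has no zero in the interval `(−∞, 0)`. -/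
theorem det_pos_on_neg_axis (μ lam z : ℝ) (hμ : 0 < μ) (hlam : 0 < lam) (hz : z < 0) :
    0 < Δdet μ lam z ∧ Δdet μ lam z ≠ 0 := by
  have hD : ∀ q : ℝ, 0 < 1 - z - Real.cos q := fun q => by
    nlinarith [Real.cos_le_one q]
  have hDne : ∀ q : ℝ, 1 - z - Real.cos q ≠ 0 := fun q => (hD q).ne'
  have hcontD : Continuous fun q : ℝ => 1 - z - Real.cos q :=
    continuous_const.sub Real.continuous_cos
  have hcont1 : Continuous fun q : ℝ => (1 - z - Real.cos q)⁻¹ :=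
    hcontD.inv₀ hDne
  have hcont2 : Continuous fun q : ℝ => Real.cos q / (1 - z - Real.cos q) :=
    Real.continuous_cos.div hcontD hDne
  have hcont3 : Continuous fun q : ℝ => (Real.cos q) ^ 2 / (1 - z - Real.cos q) :=
    (Real.continuous_cos.pow 2).div hcontD hDne
  set I1 : ℝ := ∫ q in (-Real.pi)..Real.pi, (1 - z - Real.cos q)⁻¹ with hI1def
  set I2 : ℝ := ∫ q in (-Real.pi)..Real.pi, Real.cos q / (1 - z - Real.cos q) with hI2def
  set I3 : ℝ := ∫ q in (-Real.pi)..Real.pi, (Real.cos q) ^ 2 / (1 - z - Real.cos q) with hI3def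
  have hpi : (-Real.pi) < Real.pi := by linarith [Real.pi_pos]
  have hint1 : IntervalIntegrable (fun q : ℝ => (1 - z - Real.cos q)⁻¹) volume (-Real.pi) Real.pi :=
    hcont1.intervalIntegrable _ _
  have hint2 : IntervalIntegrable (fun q : ℝ => Real.cos q / (1 - z - Real.cos q)) volume (-Real.pi) Real.pi :=
    hcont2.intervalIntegrable _ _
  have hint3 : IntervalIntegrable (fun q : ℝ => (Real.cos q) ^ 2 / (1 - z - Real.cos q)) volume (-Real.pi) Real.pi :=
    hcont3.intervalIntegrable _ _
  have hI1pos : 0 < I1 := by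
    apply intervalIntegral.intervalIntegral_pos_of_pos_on hint1
    · intro x _; exact inv_pos.2 (hD x)
    · exact hpi
  have hI3nonneg : 0 ≤ I3 := by
    apply intervalIntegral.integral_nonneg hpi.le
    intro x _
    exact div_nonneg (sq_nonneg _) (hD x).le
  -- Cauchy–Schwarz: I2² ≤ I1 * I3
  have hCS : I2 ^ 2 ≤ I1 * I3 := by
    set t : ℝ := I2 / I1 with ht_def
    have ht : t * I1 = I2 := div_mul_cancel₀ _ hI1pos.ne'
    have key : 0 ≤ t ^ 2 * I1 - 2 * t * I2 + I3 := by
      have heq : ∀ q : ℝ, (t - Real.cos q) ^ 2 / (1 - z - Real.cos q)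
          = t ^ 2 * (1 - z - Real.cos q)⁻¹
            - 2 * t * (Real.cos q / (1 - z - Real.cos q))
            + (Real.cos q) ^ 2 / (1 - z - Real.cos q) := by
        intro q
        field_simp
        ring
      have hnn : 0 ≤ ∫ q in (-Real.pi)..Real.pi,
          (t - Real.cos q) ^ 2 / (1 - z - Real.cos q) := by
        apply intervalIntegral.integral_nonneg hpi.le
        intro x _
        exact div_nonneg (sq_nonneg _) (hD x).le
      have hval : (∫ q in (-Real.pi)..Real.pi,
          (t - Real.cos q) ^ 2 / (1 - z - Real.cos q))
          = t ^ 2 * I1 - 2 * t * I2 + I3 := by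
        rw [intervalIntegral.integral_congr (g := fun q =>
          t ^ 2 * (1 - z - Real.cos q)⁻¹
            - 2 * t * (Real.cos q / (1 - z - Real.cos q))
            + (Real.cos q) ^ 2 / (1 - z - Real.cos q)) (fun q _ => heq q)]
        rw [intervalIntegral.integral_add (((hint1.const_mul _).sub (hint2.const_mul _))) hint3,
          intervalIntegral.integral_sub (hint1.const_mul _) (hint2.const_mul _),
          intervalIntegral.integral_const_mul, intervalIntegral.integral_const_mul]
      linarith [hval ▸ hnn]
    nlinarith [mul_nonneg key hI1pos.le, ht, sq_nonneg (t * I1 - I2)]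
  -- rewrite aF, bF, cF
  have hflip : ∀ q : ℝ, (z - 1 + Real.cos q) = -(1 - z - Real.cos q) := fun q => by ring
  have haF : aF z = -((2 * Real.pi)⁻¹ * I1) := by
    unfold aF
    rw [show (∫ q in (-Real.pi)..Real.pi, (z - 1 + Real.cos q)⁻¹)
        = ∫ q in (-Real.pi)..Real.pi, -((1 - z - Real.cos q)⁻¹) from
      intervalIntegral.integral_congr (fun q _ => by rw [hflip q, inv_neg]),
      intervalIntegral.integral_neg]
    ring
  have hbF : bF z = (2 * Real.pi)⁻¹ * I2 := by
    unfold bF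
    rw [show (∫ q in (-Real.pi)..Real.pi, Real.cos q / (z - 1 + Real.cos q))
        = ∫ q in (-Real.pi)..Real.pi, -(Real.cos q / (1 - z - Real.cos q)) from
      intervalIntegral.integral_congr (fun q _ => by rw [hflip q, div_neg]),
      intervalIntegral.integral_neg]
    ring
  have hcF : cF z = -((2 * Real.pi)⁻¹ * I3) := by
    unfold cF
    rw [show (∫ q in (-Real.pi)..Real.pi, (Real.cos q) ^ 2 / (z - 1 + Real.cos q))
        = ∫ q in (-Real.pi)..Real.pi, -((Real.cos q) ^ 2 / (1 - z - Real.cos q)) from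
      intervalIntegral.integral_congr (fun q _ => by rw [hflip q, div_neg]),
      intervalIntegral.integral_neg]
    ring
  have hk : 0 < (2 * Real.pi)⁻¹ := by positivity
  have hmain : 0 < Δdet μ lam z := by
    rw [Δdet, haF, hbF, hcF]
    have h1 : 0 ≤ μ * ((2 * Real.pi)⁻¹ * I1) := by positivity
    have h2 : 0 ≤ lam * ((2 * Real.pi)⁻¹ * I3) := by positivity
    have h3 : 0 ≤ μ * lam * ((2 * Real.pi)⁻¹ * (2 * Real.pi)⁻¹) * (I1 * I3 - I2 ^ 2) :=
      mul_nonneg (by positivity) (sub_nonneg.2 hCS)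
    nlinarith [h1, h2, h3]
  exact ⟨hmain, hmain.ne'⟩
end
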